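/- Let a1 ≥ a2 > 1 and let θ_1, …, θ_k be distributed according to the multiplicative inverse gamma prior with parameters (a1, a2). Then there exists m with 0 < m < a2 such that the sequence of m-th moments is strictly increasing: E(θ_{h+1}^m) > E(θ_h^m) for every h ∈ {1, …, k−1}. -/

import Mathlib

/-! For `m < a₂ ≤ a₁` every factor `ϑ_l` has the finite positive `m`-th moment `Γ(a - m)/Γ(a)`,
and by independence and positivity `E θ_{h+1}^m = E θ_h^m · E ϑ_{h+1}^m`. So the moments grow
as soon as `Γ(a₂ - m) > Γ(a₂)`, which holds for `m` close to `a₂` because `Γ` blows up at `0⁺`. -/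

open MeasureTheory ProbabilityTheory Real Filter Set

/-- Density of the inverse gamma distribution `Inv-Ga(a, b)`: equal to
`b^a / Γ(a) · x^{-(a+1)} · e^{-b/x}` for `x > 0` and `0` otherwise. -/
noncomputable def invGammaPDF (a b : ℝ) (x : ℝ) : ℝ :=
  if 0 < x then b ^ a / Real.Gamma a * x ^ (-(a + 1)) * Real.exp (-b / x) else 0

/-- The inverse gamma distribution `Inv-Ga(a, b)` as a measure on `ℝ`. -/
noncomputable def invGammaMeasure (a b : ℝ) : Measure ℝ :=
  MeasureTheory.volume.withDensity (fun x => ENNReal.ofReal (invGammaPDF a b x))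

open scoped Topology

lemma measurable_invGammaPDF (a b : ℝ) : Measurable (invGammaPDF a b) :=
  Measurable.ite measurableSet_Ioi
    ((measurable_const.mul (measurable_id.pow_const _)).mul
      (measurable_const.div measurable_id).exp) measurable_const

lemma invGammaPDF_nonneg {a b : ℝ} (ha : 0 < a) (hb : 0 ≤ b) (x : ℝ) :
    0 ≤ invGammaPDF a b x := by
  unfold invGammaPDF
  split_ifs with hx
  · positivity
  · exact le_rfl

lemma ae_pos_invGammaMeasure (a b : ℝ) : ∀ᵐ x ∂invGammaMeasure a b, 0 < x := by
  have hpdf : ∀ᵐ x ∂volume.restrict (Iic (0 : ℝ)), ENNReal.ofReal (invGammaPDF a b x) = 0 := by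
    filter_upwards [ae_restrict_mem measurableSet_Iic] with x hx
    simp [invGammaPDF, not_lt.mpr (mem_Iic.mp hx)]
  have hset : {x : ℝ | ¬0 < x} = Iic 0 := by ext x; simp
  rw [ae_iff, hset, invGammaMeasure, withDensity_apply _ measurableSet_Iic,
    lintegral_congr_ae hpdf, lintegral_zero]

lemma integral_rpow_mul_exp_neg_inv {s : ℝ} (hs : 0 < s) :
    ∫ x in Ioi (0 : ℝ), x ^ (-s - 1) * exp (-1 / x) = Gamma s := by
  rw [Gamma_eq_integral hs,
    ← integral_comp_rpow_Ioi (fun y => exp (-y) * y ^ (s - 1)) (p := -1) (by norm_num)]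
  refine setIntegral_congr_fun measurableSet_Ioi fun x (hx : 0 < x) => ?_
  rw [smul_eq_mul, rpow_neg_one, inv_rpow hx.le, ← rpow_neg hx.le, abs_neg, abs_one, one_mul,
    neg_div, one_div, mul_comm (exp _), ← mul_assoc, ← rpow_add hx]
  ring_nf

lemma integral_rpow_invGammaMeasure {a m : ℝ} (ha : 0 < a) (hma : m < a) :
    ∫ x, x ^ m ∂invGammaMeasure a 1 = Gamma (a - m) / Gamma a := by
  rw [invGammaMeasure, integral_withDensity_eq_integral_toReal_smul
    (measurable_invGammaPDF a 1).ennreal_ofReal (by simp),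
    ← integral_rpow_mul_exp_neg_inv (by linarith : 0 < a - m), ← integral_div,
    ← integral_indicator measurableSet_Ioi]
  congr 1 with x
  rw [ENNReal.toReal_ofReal (invGammaPDF_nonneg ha zero_le_one x), smul_eq_mul]
  by_cases hx : 0 < x
  · rw [indicator_of_mem (mem_Ioi.mpr hx), invGammaPDF, if_pos hx, one_rpow,
      show -(a - m) - 1 = -(a + 1) + m by ring, rpow_add hx]
    ring
  · simp [invGammaPDF, hx]

lemma tendsto_Gamma_nhdsGT_zero : Tendsto Gamma (𝓝[>] 0) atTop := by
  have hcont : ContinuousAt Gamma 1 :=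
    (differentiableAt_Gamma fun n h => by linarith [n.cast_nonneg (α := ℝ)]).continuousAt
  have hshift : Tendsto (fun x : ℝ => Gamma (x + 1)) (𝓝[>] 0) (𝓝 1) := by
    simpa only [Gamma_one, Function.comp_def] using hcont.tendsto.comp
      (((continuous_add_const (1 : ℝ)).tendsto' 0 1 (zero_add 1)).mono_left nhdsWithin_le_nhds)
  refine (hshift.pos_mul_atTop one_pos tendsto_inv_nhdsGT_zero).congr' ?_
  filter_upwards [self_mem_nhdsWithin] with x (hx : 0 < x)
  rw [Gamma_add_one hx.ne']
  field_simp

lemma exists_Gamma_lt_Gamma_sub {a : ℝ} (ha : 0 < a) :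
    ∃ m, 0 < m ∧ m < a ∧ Gamma a < Gamma (a - m) := by
  obtain ⟨ε, ⟨hΓ, hεa⟩, hε⟩ := ((tendsto_Gamma_nhdsGT_zero.eventually_gt_atTop (Gamma a)).and
    (eventually_nhdsWithin_of_eventually_nhds (eventually_lt_nhds ha)) |>.and
    self_mem_nhdsWithin).exists
  exact ⟨a - ε, by linarith, by linarith [show (0 : ℝ) < ε from hε], by rwa [sub_sub_cancel]⟩

section RandomVariables

variable {Ω : Type*} [MeasurableSpace Ω] {μ : Measure Ω}

lemma ae_pos_of_map_eq_invGammaMeasure {X : Ω → ℝ} {a b : ℝ} (hX : AEMeasurable X μ)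
    (hlaw : μ.map X = invGammaMeasure a b) : ∀ᵐ ω ∂μ, 0 < X ω :=
  (ae_map_iff hX measurableSet_Ioi).mp (hlaw ▸ ae_pos_invGammaMeasure a b)

lemma integral_rpow_of_map_eq_invGammaMeasure {X : Ω → ℝ} {a m : ℝ} (hX : AEMeasurable X μ)
    (hlaw : μ.map X = invGammaMeasure a 1) (ha : 0 < a) (hma : m < a) :
    ∫ ω, X ω ^ m ∂μ = Gamma (a - m) / Gamma a := by
  rw [← integral_map (f := fun x : ℝ => x ^ m) hX
    (measurable_id.pow_const m).aestronglyMeasurable, hlaw, integral_rpow_invGammaMeasure ha hma]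

lemma ProbabilityTheory.IndepFun.integral_mul_rpow {X Y : Ω → ℝ} (hXY : IndepFun X Y μ)
    (hX : Measurable X) (hY : Measurable Y) (hX0 : ∀ᵐ ω ∂μ, 0 ≤ X ω) (hY0 : ∀ᵐ ω ∂μ, 0 ≤ Y ω)
    (m : ℝ) :
    ∫ ω, (X ω * Y ω) ^ m ∂μ = (∫ ω, X ω ^ m ∂μ) * ∫ ω, Y ω ^ m ∂μ := by
  have hpow : Measurable fun x : ℝ => x ^ m := measurable_id.pow_const m
  have hfactor := (hXY.comp hpow hpow).integral_fun_mul_eq_mul_integral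
    (hpow.comp hX).aestronglyMeasurable (hpow.comp hY).aestronglyMeasurable
  simp only [Function.comp_apply] at hfactor
  rw [← hfactor]
  refine integral_congr_ae ?_
  filter_upwards [hX0, hY0] with ω hXω hYω
  exact mul_rpow hXω hYω

end RandomVariables

theorem multiplicative_inverse_gamma_exists_increasing_moments_general
    {Ω : Type*} [MeasureSpace Ω]
    (a1 a2 : ℝ) (ha12 : a2 ≤ a1) (ha2 : 1 < a2)
    (k : ℕ) (ϑ : ℕ → Ω → ℝ)
    (hmeas : ∀ l, Measurable (ϑ l))
    (hindep : iIndepFun ϑ ℙ)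
    (hlaw1 : Measure.map (ϑ 0) ℙ = invGammaMeasure a1 1)
    (hlaw2 : ∀ l, 1 ≤ l → Measure.map (ϑ l) ℙ = invGammaMeasure a2 1) :
    ∃ m : ℝ, 0 < m ∧ m < a2 ∧
      ∀ h, 1 ≤ h → h ≤ k - 1 →
        (∫ ω, (∏ l ∈ Finset.range h, ϑ l ω) ^ m ∂ℙ) <
          ∫ ω, (∏ l ∈ Finset.range (h + 1), ϑ l ω) ^ m ∂ℙ := by
  obtain ⟨m, hm0, hma2, hΓ⟩ := exists_Gamma_lt_Gamma_sub (by linarith : 0 < a2)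
  refine ⟨m, hm0, hma2, ?_⟩
  set M : ℕ → ℝ := fun h => ∫ ω, (∏ l ∈ Finset.range h, ϑ l ω) ^ m ∂ℙ
  have hpos : ∀ᵐ ω ∂ℙ, ∀ l, 0 < ϑ l ω := ae_all_iff.2 fun l => by
    rcases Nat.eq_zero_or_pos l with rfl | hl
    · exact ae_pos_of_map_eq_invGammaMeasure (hmeas 0).aemeasurable hlaw1
    · exact ae_pos_of_map_eq_invGammaMeasure (hmeas l).aemeasurable (hlaw2 l hl)
  have hmom : ∀ l, 1 ≤ l → ∫ ω, ϑ l ω ^ m ∂ℙ = Gamma (a2 - m) / Gamma a2 := fun l hl =>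
    integral_rpow_of_map_eq_invGammaMeasure (hmeas l).aemeasurable (hlaw2 l hl) (by linarith) hma2
  have hratio : 1 < Gamma (a2 - m) / Gamma a2 := by
    rwa [one_lt_div (Gamma_pos_of_pos (by linarith))]
  have hstep : ∀ h, M (h + 1) = M h * ∫ ω, ϑ h ω ^ m ∂ℙ := fun h => by
    have hprod := (hindep.indepFun_prod_range_succ hmeas h).integral_mul_rpow
      (by fun_prop) (hmeas h)
      (hpos.mono fun ω hω => by simpa using Finset.prod_nonneg fun l _ => (hω l).le)
      (hpos.mono fun ω hω => (hω h).le) m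
    simpa [M, Finset.prod_range_succ] using hprod
  have hM : ∀ h, 1 ≤ h → 0 < M h := by
    refine Nat.le_induction ?_ fun h hh ih => ?_
    · have hmom0 : ∫ ω, ϑ 0 ω ^ m ∂ℙ = Gamma (a1 - m) / Gamma a1 :=
        integral_rpow_of_map_eq_invGammaMeasure (hmeas 0).aemeasurable hlaw1 (by linarith)
          (by linarith)
      simp only [M, Finset.prod_range_one, hmom0]
      exact div_pos (Gamma_pos_of_pos (by linarith)) (Gamma_pos_of_pos (by linarith))
    · rw [hstep, hmom h hh]
      positivity
  intro h hh _
  show M h < M (h + 1)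
  rw [hstep, hmom h hh]
  exact lt_mul_of_one_lt_right (hM h hh) hratio

/-- for `a1 ≥ a2 > 1` there exists `0 < m < a2` such that the `m`-th moments
of the multiplicative inverse gamma prior strictly increase along `h`. -/
theorem multiplicative_inverse_gamma_exists_increasing_moments
    {Ω : Type*} [MeasureSpace Ω] [IsProbabilityMeasure (ℙ : Measure Ω)]
    (a1 a2 : ℝ) (ha12 : a2 ≤ a1) (ha2 : 1 < a2)
    (k : ℕ) (ϑ : ℕ → Ω → ℝ)
    (hmeas : ∀ l, Measurable (ϑ l))
    (hindep : iIndepFun ϑ ℙ)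
    (hlaw1 : Measure.map (ϑ 0) ℙ = invGammaMeasure a1 1)
    (hlaw2 : ∀ l, 1 ≤ l → Measure.map (ϑ l) ℙ = invGammaMeasure a2 1) :
    ∃ m : ℝ, 0 < m ∧ m < a2 ∧
      ∀ h, 1 ≤ h → h ≤ k - 1 →
        (∫ ω, (∏ l ∈ Finset.range h, ϑ l ω) ^ m ∂ℙ) <
          ∫ ω, (∏ l ∈ Finset.range (h + 1), ϑ l ω) ^ m ∂ℙ :=
  multiplicative_inverse_gamma_exists_increasing_moments_general a1 a2 ha12 ha2 k ϑ hmeas hindep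
    hlaw1 hlaw2
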